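/- Let (X_k)_{k≥1} be i.i.d. random vectors in ℝ^d with ‖X_k‖ ≤ c almost surely and E[X_1X_1ᵀ] = Φ positive definite with λ_min(Φ) = a > 0; let α ∈ (0, 1/c²]. Define Γ_{m:k} = Π_{i=m}^{k}(I − αX_iX_iᵀ) (with Γ_{m:k} = I if m > k). Then for all 1 ≤ m ≤ k and all u ∈ ℝ^d, E[‖Γ_{m:k} u‖²] ≤ (1 − αa)^{k−m+1} ‖u‖². -/

import Mathlib

/-!
Put `V_n = Γ_{m:n} u`, so that `V_n = (I − α X_n X_nᵀ) V_{n−1}`. Since `α ‖X_n‖² ≤ 1`,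
expanding the square gives `‖V_n‖² ≤ ‖V_{n−1}‖² − α ⟨X_n, V_{n−1}⟩²` pointwise. As `V_{n−1}` is a
function of `X_m, …, X_{n−1}` only, it is independent of `X_n`, and taking expectations
coordinatewise turns `E⟨X_n, V_{n−1}⟩²` into `E[V_{n−1}ᵀ Φ V_{n−1}] ≥ a E‖V_{n−1}‖²`. Hence
every factor contracts `E‖·‖²` by `1 − α a`, which is nonnegative because `a ≤ Φ_ii ≤ c²`.
-/

open MeasureTheory Matrix ProbabilityTheory

noncomputable def vnorm {d : ℕ} (v : Fin d → ℝ) : ℝ := Real.sqrt (∑ i, v i ^ 2)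

/-- The ordered product `Γ_{m:k} = (I − αX_kX_kᵀ)···(I − αX_mX_mᵀ)`, equal to `I` when
`m > k`. -/
noncomputable def prodGamma {d : ℕ} (α : ℝ) (Xs : ℕ → Fin d → ℝ) (m k : ℕ) :
    Matrix (Fin d) (Fin d) ℝ :=
  ((List.range (k + 1 - m)).map (fun j =>
      (1 : Matrix (Fin d) (Fin d) ℝ) - α • vecMulVec (Xs (k - j)) (Xs (k - j)))).prod

theorem vnorm_sq {d : ℕ} (v : Fin d → ℝ) : vnorm v ^ 2 = v ⬝ᵥ v := by
  rw [vnorm, Real.sq_sqrt (Finset.sum_nonneg fun i _ => sq_nonneg (v i))]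
  simp only [dotProduct, sq]

section Algebra

variable {ι : Type*} [Fintype ι]

theorem dotProduct_self_nonneg (v : ι → ℝ) : 0 ≤ v ⬝ᵥ v :=
  Finset.sum_nonneg fun i _ => mul_self_nonneg (v i)

theorem sq_apply_le_dotProduct_self (v : ι → ℝ) (i : ι) : v i ^ 2 ≤ v ⬝ᵥ v := by
  simpa only [dotProduct, sq] using
    Finset.single_le_sum (fun j _ => mul_self_nonneg (v j)) (Finset.mem_univ i)

theorem dotProduct_sq_eq_sum_sum (x v : ι → ℝ) :
    (x ⬝ᵥ v) ^ 2 = ∑ i, ∑ j, x i * x j * (v i * v j) := by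
  simp only [dotProduct, sq, Finset.sum_mul_sum]
  exact Finset.sum_congr rfl fun i _ => Finset.sum_congr rfl fun j _ => by ring

theorem dotProduct_mulVec_eq_sum_sum (Φ : Matrix ι ι ℝ) (v : ι → ℝ) :
    v ⬝ᵥ Φ *ᵥ v = ∑ i, ∑ j, Φ i j * (v i * v j) := by
  simp only [dotProduct, mulVec, Finset.mul_sum]
  exact Finset.sum_congr rfl fun i _ => Finset.sum_congr rfl fun j _ => by ring

variable [DecidableEq ι]

def gammaFactor (α : ℝ) (x : ι → ℝ) : Matrix ι ι ℝ := 1 - α • vecMulVec x x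

theorem gammaFactor_mulVec (α : ℝ) (x v : ι → ℝ) :
    gammaFactor α x *ᵥ v = v - (α * (x ⬝ᵥ v)) • x := by
  rw [gammaFactor, sub_mulVec, one_mulVec, smul_mulVec, vecMulVec_mulVec, op_smul_eq_smul,
    smul_smul]

theorem dotProduct_self_gammaFactor_mulVec_le {α : ℝ} (hα : 0 ≤ α) {x : ι → ℝ}
    (hx : α * (x ⬝ᵥ x) ≤ 1) (v : ι → ℝ) :
    gammaFactor α x *ᵥ v ⬝ᵥ gammaFactor α x *ᵥ v ≤ v ⬝ᵥ v - α * (x ⬝ᵥ v) ^ 2 := by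
  have hexpand : gammaFactor α x *ᵥ v ⬝ᵥ gammaFactor α x *ᵥ v
      = v ⬝ᵥ v - α * (x ⬝ᵥ v) ^ 2 * (2 - α * (x ⬝ᵥ x)) := by
    simp only [gammaFactor_mulVec, sub_dotProduct, dotProduct_sub, smul_dotProduct,
      dotProduct_smul, smul_eq_mul, dotProduct_comm v x]
    ring
  rw [hexpand]
  nlinarith [mul_nonneg hα (sq_nonneg (x ⬝ᵥ v))]

end Algebra

section ProdGamma

variable {d : ℕ}

theorem prodGamma_self (α : ℝ) (Xs : ℕ → Fin d → ℝ) (m : ℕ) :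
    prodGamma α Xs m m = gammaFactor α (Xs m) := by
  simp [prodGamma, gammaFactor]

theorem prodGamma_succ (α : ℝ) (Xs : ℕ → Fin d → ℝ) {m k : ℕ} (h : m ≤ k + 1) :
    prodGamma α Xs m (k + 1) = gammaFactor α (Xs (k + 1)) * prodGamma α Xs m k := by
  rw [prodGamma, prodGamma, show k + 1 + 1 - m = k + 1 - m + 1 by omega, List.range_succ_eq_map]
  simp only [List.map_cons, List.map_map, List.prod_cons, Nat.sub_zero]
  congr 3
  funext j
  simp only [Function.comp_apply, Nat.succ_sub_succ]

theorem dependsOn_prodGamma (α : ℝ) (m k : ℕ) :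
    DependsOn (fun Xs : ℕ → Fin d → ℝ => prodGamma α Xs m k) (Set.Iic k) := fun Xs Ys h =>
  congrArg List.prod <| List.map_congr_left fun j _ => by rw [h (k - j) (Nat.sub_le k j)]

theorem continuous_prodGamma (α : ℝ) (m k : ℕ) :
    Continuous fun Xs : ℕ → Fin d → ℝ => prodGamma α Xs m k :=
  continuous_list_prod _ fun _ _ => by fun_prop

theorem measurable_prodGamma_mulVec (α : ℝ) (m k : ℕ) (u : Fin d → ℝ) :
    Measurable fun Xs : ℕ → Fin d → ℝ => prodGamma α Xs m k *ᵥ u :=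
  ((continuous_prodGamma α m k).matrix_mulVec continuous_const).measurable

end ProdGamma

section Independence

variable {Ω : Type*} [MeasurableSpace Ω] {μ : Measure Ω}

theorem ProbabilityTheory.iIndepFun.indepFun_of_dependsOn_Iio {β γ : Type*} [MeasurableSpace β]
    [Inhabited β] [MeasurableSpace γ] {X : ℕ → Ω → β} (hX : iIndepFun X μ)
    (hXm : ∀ i, Measurable (X i)) {f : (ℕ → β) → γ} (hfm : Measurable f) {n : ℕ}
    (hf : DependsOn f (Set.Iio n)) :
    IndepFun (X n) (fun ω => f (fun i => X i ω)) μ := by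
  let extend : (Finset.range n → β) → ℕ → β := fun g i =>
    if hi : i ∈ Finset.range n then g ⟨i, hi⟩ else default
  have hextend : Measurable extend := measurable_pi_lambda _ fun i => by
    by_cases hi : i ∈ Finset.range n
    · simpa only [extend, dif_pos hi] using measurable_pi_apply _
    · simpa only [extend, dif_neg hi] using measurable_const
  have hsplit := (hX.indepFun_finset {n} (Finset.range n) (by simp) hXm).comp
    (measurable_pi_apply ⟨n, Finset.mem_singleton_self n⟩) (hfm.comp hextend)
  have hrestrict : (f ∘ extend) ∘ (fun ω (i : Finset.range n) => X i ω)
      = fun ω => f (fun i => X i ω) :=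
    funext fun ω => hf fun i hi => by simp [extend, Set.mem_Iio.mp hi]
  rwa [hrestrict] at hsplit

theorem ProbabilityTheory.iIndepFun.indepFun_prodGamma_mulVec {d : ℕ} {X : ℕ → Ω → Fin d → ℝ}
    (hindep : iIndepFun X μ) (hXm : ∀ n, Measurable (X n)) (α : ℝ) (m n : ℕ) (u : Fin d → ℝ) :
    IndepFun (X (n + 1)) (fun ω => prodGamma α (fun i => X i ω) m n *ᵥ u) μ :=
  hindep.indepFun_of_dependsOn_Iio hXm (measurable_prodGamma_mulVec α m n u) fun _ _ h =>
    congrArg (· *ᵥ u) (dependsOn_prodGamma α m n fun i hi => h i (Nat.lt_succ_of_le hi))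

variable {ι : Type*} {X V : Ω → ι → ℝ}

theorem ProbabilityTheory.IndepFun.mul_apply_mul_apply (hXV : IndepFun X V μ) (i j : ι) :
    IndepFun (fun ω => X ω i * X ω j) (fun ω => V ω i * V ω j) μ :=
  hXV.comp (φ := fun x : ι → ℝ => x i * x j) (ψ := fun v : ι → ℝ => v i * v j) (by fun_prop)
    (by fun_prop)

theorem ProbabilityTheory.IndepFun.integrable_mul_mul_apply (hXV : IndepFun X V μ)
    (hX : ∀ i, MemLp (fun ω => X ω i) 2 μ) (hV : ∀ i, MemLp (fun ω => V ω i) 2 μ) (i j : ι) :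
    Integrable (fun ω => X ω i * X ω j * (V ω i * V ω j)) μ :=
  (hXV.mul_apply_mul_apply i j).integrable_mul ((hX i).integrable_mul (hX j))
    ((hV i).integrable_mul (hV j))

variable [Fintype ι]

theorem integral_sum_sum {f : ι → ι → Ω → ℝ} (hf : ∀ i j, Integrable (f i j) μ) :
    ∫ ω, ∑ i, ∑ j, f i j ω ∂μ = ∑ i, ∑ j, ∫ ω, f i j ω ∂μ := by
  rw [integral_finsetSum _ fun i _ => integrable_finsetSum _ fun j _ => hf i j]
  exact Finset.sum_congr rfl fun i _ => integral_finsetSum _ fun j _ => hf i j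

theorem memLp_two_apply_of_dotProduct_self_le [IsFiniteMeasure μ] (hXm : Measurable X) {c : ℝ}
    (hXc : ∀ᵐ ω ∂μ, X ω ⬝ᵥ X ω ≤ c ^ 2) (i : ι) : MemLp (fun ω => X ω i) 2 μ :=
  MemLp.of_bound (by fun_prop) |c| <| hXc.mono fun ω h => by
    rw [Real.norm_eq_abs]
    exact sq_le_sq.mp ((sq_apply_le_dotProduct_self (X ω) i).trans h)

theorem memLp_two_apply_of_integrable_dotProduct_self (hVm : Measurable V)
    (hV : Integrable (fun ω => V ω ⬝ᵥ V ω) μ) (i : ι) : MemLp (fun ω => V ω i) 2 μ := by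
  refine (memLp_two_iff_integrable_sq (by fun_prop)).mpr <| hV.mono' (by fun_prop) ?_
  filter_upwards with ω
  rw [Real.norm_of_nonneg (sq_nonneg _)]
  exact sq_apply_le_dotProduct_self (V ω) i

theorem integrable_dotProduct_mulVec (hV : ∀ i, MemLp (fun ω => V ω i) 2 μ) (Φ : Matrix ι ι ℝ) :
    Integrable (fun ω => V ω ⬝ᵥ Φ *ᵥ V ω) μ := by
  simp only [dotProduct_mulVec_eq_sum_sum]
  exact integrable_finsetSum _ fun i _ => integrable_finsetSum _ fun j _ =>
    ((hV i).integrable_mul (hV j)).const_mul (Φ i j)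

theorem ProbabilityTheory.IndepFun.integrable_dotProduct_sq (hXV : IndepFun X V μ)
    (hX : ∀ i, MemLp (fun ω => X ω i) 2 μ) (hV : ∀ i, MemLp (fun ω => V ω i) 2 μ) :
    Integrable (fun ω => (X ω ⬝ᵥ V ω) ^ 2) μ := by
  simp only [dotProduct_sq_eq_sum_sum]
  exact integrable_finsetSum _ fun i _ => integrable_finsetSum _ fun j _ =>
    hXV.integrable_mul_mul_apply hX hV i j

theorem ProbabilityTheory.IndepFun.integral_dotProduct_sq (hXV : IndepFun X V μ)
    (hX : ∀ i, MemLp (fun ω => X ω i) 2 μ) (hV : ∀ i, MemLp (fun ω => V ω i) 2 μ)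
    {Φ : Matrix ι ι ℝ} (hΦ : ∀ i j, ∫ ω, X ω i * X ω j ∂μ = Φ i j) :
    ∫ ω, (X ω ⬝ᵥ V ω) ^ 2 ∂μ = ∫ ω, V ω ⬝ᵥ Φ *ᵥ V ω ∂μ := by
  have hVV (i j : ι) : Integrable (fun ω => V ω i * V ω j) μ := (hV i).integrable_mul (hV j)
  simp only [dotProduct_sq_eq_sum_sum, dotProduct_mulVec_eq_sum_sum]
  rw [integral_sum_sum (hXV.integrable_mul_mul_apply hX hV),
    integral_sum_sum fun i j => (hVV i j).const_mul (Φ i j)]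
  refine Finset.sum_congr rfl fun i _ => Finset.sum_congr rfl fun j _ => ?_
  rw [integral_const_mul, ← hΦ i j]
  exact (hXV.mul_apply_mul_apply i j).integral_mul_eq_mul_integral
    ((hX i).integrable_mul (hX j)).1 (hVV i j).1

end Independence

section Contraction

variable {Ω : Type*} [MeasurableSpace Ω] {μ : Measure Ω} {ι : Type*} [Fintype ι] [DecidableEq ι]
  {X V : Ω → ι → ℝ} {α : ℝ}

theorem measurable_dotProduct_self_gammaFactor_mulVec (hXm : Measurable X) (hVm : Measurable V) :
    Measurable fun ω => gammaFactor α (X ω) *ᵥ V ω ⬝ᵥ gammaFactor α (X ω) *ᵥ V ω := by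
  simp only [gammaFactor_mulVec]
  fun_prop

theorem integrable_dotProduct_self_gammaFactor_mulVec (hα : 0 ≤ α) (hXm : Measurable X)
    (hVm : Measurable V) (hXα : ∀ᵐ ω ∂μ, α * (X ω ⬝ᵥ X ω) ≤ 1)
    (hV : Integrable (fun ω => V ω ⬝ᵥ V ω) μ) :
    Integrable (fun ω => gammaFactor α (X ω) *ᵥ V ω ⬝ᵥ gammaFactor α (X ω) *ᵥ V ω) μ := by
  refine hV.mono' (measurable_dotProduct_self_gammaFactor_mulVec hXm hVm).aestronglyMeasurable ?_
  filter_upwards [hXα] with ω hω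
  rw [Real.norm_of_nonneg (dotProduct_self_nonneg _)]
  have := dotProduct_self_gammaFactor_mulVec_le hα hω (V ω)
  nlinarith [mul_nonneg hα (sq_nonneg (X ω ⬝ᵥ V ω))]

theorem ProbabilityTheory.IndepFun.integral_dotProduct_self_gammaFactor_mulVec_le
    (hXV : IndepFun X V μ) (hα : 0 ≤ α) (hXm : Measurable X) (hVm : Measurable V)
    (hX : ∀ i, MemLp (fun ω => X ω i) 2 μ) (hXα : ∀ᵐ ω ∂μ, α * (X ω ⬝ᵥ X ω) ≤ 1)
    (hV : Integrable (fun ω => V ω ⬝ᵥ V ω) μ) {Φ : Matrix ι ι ℝ}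
    (hΦ : ∀ i j, ∫ ω, X ω i * X ω j ∂μ = Φ i j) {a : ℝ}
    (hmin : ∀ v : ι → ℝ, a * (v ⬝ᵥ v) ≤ v ⬝ᵥ Φ *ᵥ v) :
    ∫ ω, gammaFactor α (X ω) *ᵥ V ω ⬝ᵥ gammaFactor α (X ω) *ᵥ V ω ∂μ
      ≤ (1 - α * a) * ∫ ω, V ω ⬝ᵥ V ω ∂μ := by
  have hVi := memLp_two_apply_of_integrable_dotProduct_self hVm hV
  have hsq := (hXV.integrable_dotProduct_sq hX hVi).const_mul α
  calc ∫ ω, gammaFactor α (X ω) *ᵥ V ω ⬝ᵥ gammaFactor α (X ω) *ᵥ V ω ∂μ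
      ≤ ∫ ω, (V ω ⬝ᵥ V ω - α * (X ω ⬝ᵥ V ω) ^ 2) ∂μ :=
        integral_mono_ae (integrable_dotProduct_self_gammaFactor_mulVec hα hXm hVm hXα hV)
          (hV.sub hsq) (hXα.mono fun ω hω => dotProduct_self_gammaFactor_mulVec_le hα hω (V ω))
    _ = ∫ ω, V ω ⬝ᵥ V ω ∂μ - α * ∫ ω, V ω ⬝ᵥ Φ *ᵥ V ω ∂μ := by
        rw [integral_sub hV hsq, integral_const_mul, hXV.integral_dotProduct_sq hX hVi hΦ]
    _ ≤ ∫ ω, V ω ⬝ᵥ V ω ∂μ - α * ∫ ω, a * (V ω ⬝ᵥ V ω) ∂μ := by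
        refine sub_le_sub_left (mul_le_mul_of_nonneg_left ?_ hα) _
        exact integral_mono (hV.const_mul a) (integrable_dotProduct_mulVec hVi Φ) fun ω => hmin _
    _ = (1 - α * a) * ∫ ω, V ω ⬝ᵥ V ω ∂μ := by
        rw [integral_const_mul]
        ring

end Contraction

section Gamma

variable {Ω : Type*} [MeasurableSpace Ω] {μ : Measure Ω} [IsProbabilityMeasure μ]

theorem le_sq_of_forall_mul_dotProduct_self_le {ι : Type*} [Fintype ι] [DecidableEq ι]
    [Nonempty ι] {X : Ω → ι → ℝ} {c a : ℝ} {Φ : Matrix ι ι ℝ}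
    (hXc : ∀ᵐ ω ∂μ, X ω ⬝ᵥ X ω ≤ c ^ 2) (hΦ : ∀ i j, ∫ ω, X ω i * X ω j ∂μ = Φ i j)
    (hmin : ∀ v : ι → ℝ, a * (v ⬝ᵥ v) ≤ v ⬝ᵥ Φ *ᵥ v) : a ≤ c ^ 2 := by
  obtain ⟨i⟩ := ‹Nonempty ι›
  calc a ≤ Φ i i := by simpa using hmin (Pi.single i 1)
    _ = ∫ ω, X ω i ^ 2 ∂μ := by simp only [← hΦ i i, sq]
    _ ≤ ∫ _, c ^ 2 ∂μ := integral_mono_of_nonneg (ae_of_all _ fun ω => sq_nonneg _)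
        (integrable_const _) (hXc.mono fun ω h => (sq_apply_le_dotProduct_self (X ω) i).trans h)
    _ = c ^ 2 := by simp

theorem integral_dotProduct_self_prodGamma_mulVec_le {d : ℕ} {X : ℕ → Ω → Fin d → ℝ}
    {α c a : ℝ} {Φ : Matrix (Fin d) (Fin d) ℝ} (hα : 0 ≤ α) (hαc : α * c ^ 2 ≤ 1)
    (hr : 0 ≤ 1 - α * a) (hXm : ∀ n, Measurable (X n)) (hindep : iIndepFun X μ)
    (hXc : ∀ n, ∀ᵐ ω ∂μ, X n ω ⬝ᵥ X n ω ≤ c ^ 2)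
    (hΦ : ∀ n i j, ∫ ω, X n ω i * X n ω j ∂μ = Φ i j)
    (hmin : ∀ v : Fin d → ℝ, a * (v ⬝ᵥ v) ≤ v ⬝ᵥ Φ *ᵥ v) (u : Fin d → ℝ) {m k : ℕ}
    (hmk : m ≤ k) :
    ∫ ω, prodGamma α (fun i => X i ω) m k *ᵥ u ⬝ᵥ prodGamma α (fun i => X i ω) m k *ᵥ u ∂μ
      ≤ (1 - α * a) ^ (k + 1 - m) * (u ⬝ᵥ u) := by
  have hXα (n : ℕ) : ∀ᵐ ω ∂μ, α * (X n ω ⬝ᵥ X n ω) ≤ 1 :=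
    (hXc n).mono fun ω h => (mul_le_mul_of_nonneg_left h hα).trans hαc
  have hstep (n : ℕ) {W : Ω → Fin d → ℝ} (hXW : IndepFun (X n) W μ) (hWm : Measurable W)
      (hW : Integrable (fun ω => W ω ⬝ᵥ W ω) μ) :
      Integrable (fun ω => gammaFactor α (X n ω) *ᵥ W ω ⬝ᵥ gammaFactor α (X n ω) *ᵥ W ω) μ ∧
        ∫ ω, gammaFactor α (X n ω) *ᵥ W ω ⬝ᵥ gammaFactor α (X n ω) *ᵥ W ω ∂μ
          ≤ (1 - α * a) * ∫ ω, W ω ⬝ᵥ W ω ∂μ :=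
    ⟨integrable_dotProduct_self_gammaFactor_mulVec hα (hXm n) hWm (hXα n) hW,
      hXW.integral_dotProduct_self_gammaFactor_mulVec_le hα (hXm n) hWm
        (memLp_two_apply_of_dotProduct_self_le (hXm n) (hXc n)) (hXα n) hW
        (hΦ n) hmin⟩
  set V : ℕ → Ω → Fin d → ℝ := fun n ω => prodGamma α (fun i => X i ω) m n *ᵥ u
  have hVm (n : ℕ) : Measurable (V n) :=
    (measurable_prodGamma_mulVec α m n u).comp (measurable_pi_lambda _ hXm)
  suffices Integrable (fun ω => V k ω ⬝ᵥ V k ω) μ ∧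
      ∫ ω, V k ω ⬝ᵥ V k ω ∂μ ≤ (1 - α * a) ^ (k + 1 - m) * (u ⬝ᵥ u) from this.2
  induction k, hmk using Nat.le_induction with
  | base =>
    have := hstep m (indepFun_const_right (X m) u) measurable_const (integrable_const _)
    simpa [V, prodGamma_self] using this
  | succ k hmk ih =>
    have hrec : V (k + 1) = fun ω => gammaFactor α (X (k + 1) ω) *ᵥ V k ω := funext fun ω => by
      simp only [V, prodGamma_succ α _ (Nat.le_succ_of_le hmk), mulVec_mulVec]
    obtain ⟨hint, hle⟩ := hstep (k + 1) (hindep.indepFun_prodGamma_mulVec hXm α m k u) (hVm k) ih.1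
    refine ⟨hrec ▸ hint, hrec ▸ hle.trans ?_⟩
    calc (1 - α * a) * ∫ ω, V k ω ⬝ᵥ V k ω ∂μ
        ≤ (1 - α * a) * ((1 - α * a) ^ (k + 1 - m) * (u ⬝ᵥ u)) :=
          mul_le_mul_of_nonneg_left ih.2 hr
      _ = (1 - α * a) ^ (k + 1 + 1 - m) * (u ⬝ᵥ u) := by
          rw [show k + 1 + 1 - m = k + 1 - m + 1 by omega]
          ring

end Gamma

theorem stmt_9_general {d : ℕ} (c a α : ℝ)
    (hα : 0 < α) (hα' : α ≤ 1 / c ^ 2)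
    (Φ : Matrix (Fin d) (Fin d) ℝ)
    (hmin : ∀ u : Fin d → ℝ, a * vnorm u ^ 2 ≤ u ⬝ᵥ Φ.mulVec u)
    {Ω : Type*} [MeasurableSpace Ω] (μ : Measure Ω) [IsProbabilityMeasure μ]
    (X : ℕ → Ω → Fin d → ℝ) (hXmeas : ∀ k, Measurable (X k))
    (hindep : iIndepFun X μ)
    (hident : ∀ k, IdentDistrib (X k) (X 1) μ μ)
    (hXbdd : ∀ k, ∀ᵐ ω ∂μ, vnorm (X k ω) ≤ c)
    (hXΦ : ∀ i j, ∫ ω, X 1 ω i * X 1 ω j ∂μ = Φ i j) :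
    ∀ m k : ℕ, 1 ≤ m → m ≤ k → ∀ u : Fin d → ℝ,
      ∫ ω, vnorm ((prodGamma α (fun i => X i ω) m k).mulVec u) ^ 2 ∂μ
        ≤ (1 - α * a) ^ (k - m + 1) * vnorm u ^ 2 := by
  intro m k _ hmk u
  simp only [vnorm_sq] at hmin ⊢
  rcases isEmpty_or_nonempty (Fin d) with _ | _
  · simp [Subsingleton.elim u 0]
  have hαc : α * c ^ 2 ≤ 1 := calc
    α * c ^ 2 ≤ 1 / c ^ 2 * c ^ 2 := mul_le_mul_of_nonneg_right hα' (sq_nonneg c)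
    _ ≤ 1 := by rcases eq_or_ne (c ^ 2) 0 with h | h <;> simp [h]
  have hXc (n : ℕ) : ∀ᵐ ω ∂μ, X n ω ⬝ᵥ X n ω ≤ c ^ 2 := (hXbdd n).mono fun ω h => by
    rw [← vnorm_sq]
    exact pow_le_pow_left₀ (Real.sqrt_nonneg _) h 2
  have hΦ (n : ℕ) (i j : Fin d) : ∫ ω, X n ω i * X n ω j ∂μ = Φ i j := by
    rw [← hXΦ i j]
    exact ((hident n).comp (u := fun x : Fin d → ℝ => x i * x j) (by fun_prop)).integral_eq
  have hr : 0 ≤ 1 - α * a := by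
    have := le_sq_of_forall_mul_dotProduct_self_le (hXc 1) (hΦ 1) hmin
    nlinarith
  rw [show k - m + 1 = k + 1 - m by omega]
  exact integral_dotProduct_self_prodGamma_mulVec_le hα.le hαc hr hXmeas hindep hXc hΦ hmin u hmk

/-- For i.i.d. `X_k` with `‖X_k‖ ≤ c` a.s. and `E[X₁X₁ᵀ] = Φ` positive
definite with `λ_min(Φ) = a > 0`, and `0 < α ≤ 1/c²`, we have for `1 ≤ m ≤ k`:
`E[‖Γ_{m:k}u‖²] ≤ (1−αa)^{k−m+1}‖u‖²`. -/
theorem stmt_9 {d : ℕ} (c a α : ℝ) (hc : 0 < c) (ha : 0 < a)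
    (hα : 0 < α) (hα' : α ≤ 1 / c ^ 2)
    (Φ : Matrix (Fin d) (Fin d) ℝ) (hΦpd : Φ.PosDef)
    (hmin : ∀ u : Fin d → ℝ, a * vnorm u ^ 2 ≤ u ⬝ᵥ Φ.mulVec u)
    {Ω : Type*} [MeasurableSpace Ω] (μ : Measure Ω) [IsProbabilityMeasure μ]
    (X : ℕ → Ω → Fin d → ℝ) (hXmeas : ∀ k, Measurable (X k))
    (hindep : iIndepFun X μ)
    (hident : ∀ k, IdentDistrib (X k) (X 1) μ μ)
    (hXbdd : ∀ k, ∀ᵐ ω ∂μ, vnorm (X k ω) ≤ c)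
    (hXΦ : ∀ i j, ∫ ω, X 1 ω i * X 1 ω j ∂μ = Φ i j) :
    ∀ m k : ℕ, 1 ≤ m → m ≤ k → ∀ u : Fin d → ℝ,
      ∫ ω, vnorm ((prodGamma α (fun i => X i ω) m k).mulVec u) ^ 2 ∂μ
        ≤ (1 - α * a) ^ (k - m + 1) * vnorm u ^ 2 :=
  stmt_9_general c a α hα hα' Φ hmin μ X hXmeas hindep hident hXbdd hXΦ
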